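/- arXiv:0812.4669 — 2 statements merged into one kernel-verified Lean document; each statement's English description precedes it below -/
import Mathlib

section
/- The number N(M,N) of collections {N_{jk}} of nonnegative integers (j ≥ 0, 1 ≤ k ≤ q_j with q_j = [j^{1/2}]) of ordered samples satisfying Σ_{j,k} N_{jk} = N and Σ_{j,k} j N_{jk} ≤ M satisfies N(M,N) ≤ N! exp{βM + μN + N} for any β > 0 and μ chosen so that Σ_{j≥0} q_j e^{-βj-μ} = N. -/
/-!
Rankin's trick: an admissible placement `g` has `∑ᵢ j(gᵢ) ≤ M`, so
`1 ≤ e^{βM+μN} ∏ᵢ e^{-β j(gᵢ) - μ}`. Summing over all placements into the compartments of level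
at most `M`, the right-hand side factorises as `e^{βM+μN} Z^N` with
`Z = ∑_{j ≤ M} q_j e^{-βj-μ} ≤ N`, and `N^N ≤ N! e^N`.
-/

open Real Finset
open scoped Nat

theorem card_filter_sum_le_le_exp_mul_pow {α : Type*} (F : Finset α) (e : α → ℕ) {β : ℝ}
    (hβ : 0 ≤ β) (μ : ℝ) (N M : ℕ) :
    (#{g ∈ Fintype.piFinset fun _ : Fin N => F | ∑ i, e (g i) ≤ M} : ℝ) ≤
      exp (β * M + μ * N) * (∑ a ∈ F, exp (-β * e a - μ)) ^ N := by
  set w : α → ℝ := fun a => exp (-β * e a - μ)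
  have rankin (g : Fin N → α) (hg : ∑ i, e (g i) ≤ M) :
      1 ≤ exp (β * M + μ * N) * ∏ i, w (g i) := by
    have hg' : ((∑ i, e (g i) : ℕ) : ℝ) ≤ M := by exact_mod_cast hg
    rw [← exp_sum, ← exp_add, one_le_exp_iff, sum_sub_distrib, ← mul_sum]
    push_cast at hg' ⊢
    simp only [sum_const, card_univ, Fintype.card_fin, nsmul_eq_mul]
    nlinarith
  calc (#{g ∈ Fintype.piFinset fun _ : Fin N => F | ∑ i, e (g i) ≤ M} : ℝ)
      = ∑ g ∈ Fintype.piFinset (fun _ : Fin N => F) with ∑ i, e (g i) ≤ M, 1 := by simp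
    _ ≤ ∑ g ∈ Fintype.piFinset (fun _ : Fin N => F) with ∑ i, e (g i) ≤ M,
          exp (β * M + μ * N) * ∏ i, w (g i) :=
        sum_le_sum fun g hg => rankin g (mem_filter.1 hg).2
    _ ≤ ∑ g ∈ Fintype.piFinset (fun _ : Fin N => F), exp (β * M + μ * N) * ∏ i, w (g i) :=
        sum_le_sum_of_subset_of_nonneg (filter_subset _ _) fun _ _ _ => by positivity
    _ = exp (β * M + μ * N) * (∑ a ∈ F, w a) ^ N := by rw [← mul_sum, sum_pow']

def compartmentsUpTo (q : ℕ → ℕ) (M : ℕ) : Finset (ℕ × ℕ) :=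
  (range (M + 1)).biUnion fun j => {j} ×ˢ range (q j)

theorem mem_compartmentsUpTo {q : ℕ → ℕ} {M : ℕ} {p : ℕ × ℕ} :
    p ∈ compartmentsUpTo q M ↔ p.1 ∈ range (M + 1) ∧ p.2 ∈ range (q p.1) := by
  rcases p with ⟨j, k⟩
  simp [compartmentsUpTo]

theorem sum_compartmentsUpTo (q : ℕ → ℕ) (M : ℕ) (f : ℕ → ℝ) :
    ∑ p ∈ compartmentsUpTo q M, f p.1 = ∑ j ∈ range (M + 1), q j * f j := by
  rw [sum_finset_product _ (range (M + 1)) (fun j => range (q j)) fun _ => mem_compartmentsUpTo]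
  simp

theorem card_admissible_placements_le (q : ℕ → ℕ) {β : ℝ} (hβ : 0 ≤ β) (μ : ℝ) (N M : ℕ) :
    (Nat.card {g : Fin N → ℕ × ℕ // (∀ i, (g i).2 < q (g i).1) ∧ ∑ i, (g i).1 ≤ M} : ℝ) ≤
      exp (β * M + μ * N) * (∑ j ∈ range (M + 1), q j * exp (-β * j - μ)) ^ N := by
  have hmem (g : Fin N → ℕ × ℕ) : ((∀ i, (g i).2 < q (g i).1) ∧ ∑ i, (g i).1 ≤ M) ↔
      g ∈ {g ∈ Fintype.piFinset fun _ : Fin N => compartmentsUpTo q M | ∑ i, (g i).1 ≤ M} := by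
    simp only [mem_filter, Fintype.mem_piFinset, mem_compartmentsUpTo, mem_range]
    refine ⟨fun ⟨hq, hM⟩ => ⟨fun i => ⟨?_, hq i⟩, hM⟩, fun ⟨h, hM⟩ => ⟨fun i => (h i).2, hM⟩⟩
    exact Nat.lt_succ_of_le ((single_le_sum (fun i _ => Nat.zero_le _) (mem_univ i)).trans hM)
  rw [Nat.card_congr (Equiv.subtypeEquivRight hmem), Nat.card_eq_fintype_card, Fintype.card_coe,
    ← sum_compartmentsUpTo q M fun j => exp (-β * j - μ)]
  exact card_filter_sum_le_le_exp_mul_pow _ Prod.fst hβ μ N M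

theorem summable_natCast_mul_exp_of_le {q : ℕ → ℕ} (hq : ∀ j, q j ≤ j) {β : ℝ} (hβ : 0 < β)
    (μ : ℝ) : Summable fun j : ℕ => (q j : ℝ) * exp (-β * j - μ) := by
  refine .of_nonneg_of_le (fun j => by positivity) (fun j => ?_)
    ((summable_pow_mul_exp_neg_nat_mul 1 hβ).mul_right (exp (-μ)))
  rw [pow_one, mul_assoc, ← exp_add, ← sub_eq_add_neg, neg_mul]
  gcongr
  exact_mod_cast hq j

theorem pow_le_factorial_mul_exp (n : ℕ) : (n : ℝ) ^ n ≤ n ! * exp n := by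
  have := pow_div_factorial_le_exp (x := (n : ℝ)) (Nat.cast_nonneg n) n
  rwa [div_le_iff₀ (by positivity), mul_comm] at this

/-- The number of ordered placements of N distinguishable balls into compartments
(j,k), k < q_j = ⌊√j⌋, with total energy Σ j ≤ M, is at most N! exp(βM + μN + N),
provided Σ_j q_j e^{-βj-μ} = N. -/
theorem ordered_sample_count_upper_bound (N M : ℕ) (β μ : ℝ) (hβ : 0 < β)
    (hnorm : ∑' j : ℕ, (⌊Real.sqrt j⌋₊ : ℝ) * Real.exp (-β * j - μ) = N) :
    ((Nat.card {g : Fin N → ℕ × ℕ //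
        (∀ i, (g i).2 < ⌊Real.sqrt ((g i).1 : ℝ)⌋₊) ∧
        (∑ i, (g i).1) ≤ M}) : ℝ) ≤
      (Nat.factorial N : ℝ) * Real.exp (β * M + μ * N + N) := by
  have hq (j : ℕ) : ⌊√(j : ℝ)⌋₊ ≤ j := by
    rw [nat_floor_real_sqrt_eq_nat_sqrt]
    exact Nat.sqrt_le_self j
  have hZ : ∑ j ∈ range (M + 1), (⌊√(j : ℝ)⌋₊ : ℝ) * exp (-β * j - μ) ≤ N :=
    hnorm ▸ (summable_natCast_mul_exp_of_le hq hβ μ).sum_le_tsum _ fun _ _ => by positivity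
  calc _ ≤ exp (β * M + μ * N) * (∑ j ∈ range (M + 1), (⌊√(j : ℝ)⌋₊ : ℝ) * exp (-β * j - μ)) ^ N :=
        card_admissible_placements_le _ hβ.le μ N M
    _ ≤ exp (β * M + μ * N) * (N ! * exp N) := by
        gcongr
        exact (pow_le_pow_left₀ (by positivity) hZ N).trans (pow_le_factorial_mul_exp N)
    _ = N ! * exp (β * M + μ * N + N) := by rw [exp_add (β * M + μ * N)]; ring
end

section
/- As β → 0⁺, Σ_{j=1}^∞ j [j^{1/2}] / (e^{βj} − 1) ∼ β^{-5/2} Γ(5/2) ζ(5/2), where the asymptotic constant equals ∫_0^∞ x^{3/2}/(e^x − 1) dx. -/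
/-!
For `β > 0` and `f` on `(0, ∞)`, `β • Σ_{j ≥ 1} f (β j)` is the integral over `(0, ∞)` of the step
function `x ↦ f (β ⌈x/β⌉)`, which tends to `f` pointwise as `β → 0⁺`; when `f` is continuous and
dominated on unit windows by an integrable function, dominated convergence turns this Riemann sum
into `∫ f`. For `f y = y ^ t / (e ^ y - 1)` with `1 ≤ t ≤ 2`, the bound `y e^{y/2} ≤ e ^ y - 1`
provides the majorant `(x + 2) e^{-x/2}`, so `β ^ (t+1) Σ j ^ t / (e^{βj} - 1) → ∫ f`.
Since `j ^ (3/2) - j ≤ j ⌊√j⌋ ≤ j ^ (3/2)`, the case `t = 3/2` gives the main term and the case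
`t = 1` shows that the error is `O(β⁻²) = o(β^{-5/2})`. The constant is a Mellin transform:
expanding `1 / (e ^ x - 1) = Σ_{n ≥ 1} e^{-nx}` and integrating termwise gives `Γ(s) ζ(s)`.
-/

open Real Filter MeasureTheory Set Topology Function

section RiemannSum

variable {E : Type*} [NormedAddCommGroup E] {β : ℝ}

lemma natCeil_div_eq_succ_iff (hβ : 0 < β) {x : ℝ} {j : ℕ} :
    ⌈x / β⌉₊ = j + 1 ↔ x ∈ Ioc (β * j) (β * (j + 1)) := by
  rw [Nat.ceil_eq_iff j.succ_ne_zero, mem_Ioc, lt_div_iff₀ hβ, div_le_iff₀ hβ]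
  push_cast
  simp only [mul_comm β]

lemma iUnion_Ioc_mul_natCast (hβ : 0 < β) :
    ⋃ j : ℕ, Ioc (β * j) (β * (j + 1)) = Ioi 0 := by
  ext x
  simp only [mem_iUnion, ← natCeil_div_eq_succ_iff hβ, Nat.exists_eq_add_one, Nat.ceil_pos,
    mem_Ioi, div_pos_iff_of_pos_right hβ]

lemma pairwise_disjoint_Ioc_mul_natCast (hβ : 0 < β) :
    Pairwise (Disjoint on fun j : ℕ => Ioc (β * j) (β * (j + 1))) := by
  intro i j hij
  refine Set.disjoint_left.mpr fun x hi hj => hij ?_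
  rw [← natCeil_div_eq_succ_iff hβ] at hi hj
  omega

lemma mul_natCeil_div_mem_Ico (hβ : 0 < β) {x : ℝ} (hx : 0 ≤ x) :
    β * ⌈x / β⌉₊ ∈ Ico x (x + β) := by
  have hle := Nat.le_ceil (x / β)
  have hlt := Nat.ceil_lt_add_one (div_nonneg hx hβ.le)
  constructor
  · rwa [div_le_iff₀' hβ] at hle
  · calc β * ⌈x / β⌉₊ < β * (x / β + 1) := by gcongr
      _ = x + β := by field_simp

lemma aestronglyMeasurable_comp_mul_natCeil_div (f : ℝ → E) (μ : Measure ℝ) :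
    AEStronglyMeasurable (fun x => f (β * ⌈x / β⌉₊)) μ :=
  (StronglyMeasurable.of_discrete (f := fun n : ℕ => f (β * n))).comp_measurable
    (Nat.measurable_ceil.comp (measurable_id.div_const β)) |>.aestronglyMeasurable

lemma hasSum_integral_comp_mul_natCeil_div [NormedSpace ℝ E] [CompleteSpace E] {f : ℝ → E}
    (hβ : 0 < β) (hf : IntegrableOn (fun x => f (β * ⌈x / β⌉₊)) (Ioi 0)) :
    HasSum (fun j : ℕ => β • f (β * (j + 1))) (∫ x in Ioi 0, f (β * ⌈x / β⌉₊)) := by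
  rw [← iUnion_Ioc_mul_natCast hβ] at hf ⊢
  convert hasSum_integral_iUnion (fun _ => measurableSet_Ioc)
    (pairwise_disjoint_Ioc_mul_natCast hβ) hf using 1 with j
  funext j
  rw [setIntegral_congr_fun measurableSet_Ioc
      (fun x hx => by rw [(natCeil_div_eq_succ_iff hβ).2 hx, Nat.cast_succ]),
    setIntegral_const, Real.volume_real_Ioc, ← mul_sub, add_sub_cancel_left, mul_one,
    max_eq_left hβ.le]

variable {f : ℝ → E} {g : ℝ → ℝ}

lemma norm_comp_mul_natCeil_div_le (hfg : ∀ x > 0, ∀ y ∈ Icc x (x + 1), ‖f y‖ ≤ g x)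
    (hβ : β ∈ Ioc 0 1) {x : ℝ} (hx : 0 < x) : ‖f (β * ⌈x / β⌉₊)‖ ≤ g x := by
  obtain ⟨hle, hlt⟩ := mul_natCeil_div_mem_Ico hβ.1 hx.le
  exact hfg x hx _ ⟨hle, by linarith [hβ.2]⟩

lemma integrableOn_comp_mul_natCeil_div (hg : IntegrableOn g (Ioi 0))
    (hfg : ∀ x > 0, ∀ y ∈ Icc x (x + 1), ‖f y‖ ≤ g x) (hβ : β ∈ Ioc 0 1) :
    IntegrableOn (fun x => f (β * ⌈x / β⌉₊)) (Ioi 0) :=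
  hg.mono' (aestronglyMeasurable_comp_mul_natCeil_div f _) <|
    (ae_restrict_mem measurableSet_Ioi).mono fun _ hx => norm_comp_mul_natCeil_div_le hfg hβ hx

lemma tendsto_mul_natCeil_div {x : ℝ} (hx : 0 ≤ x) :
    Tendsto (fun β : ℝ => β * ⌈x / β⌉₊) (𝓝[>] 0) (𝓝 x) := by
  have hupper : Tendsto (fun β : ℝ => x + β) (𝓝[>] 0) (𝓝 x) := by
    simpa using ((continuous_const_add x).tendsto 0).mono_left nhdsWithin_le_nhds
  refine tendsto_of_tendsto_of_tendsto_of_le_of_le' tendsto_const_nhds hupper ?_ ?_ <;>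
    filter_upwards [self_mem_nhdsWithin] with β hβ
  exacts [(mul_natCeil_div_mem_Ico hβ hx).1, (mul_natCeil_div_mem_Ico hβ hx).2.le]

theorem tendsto_integral_comp_mul_natCeil_div [NormedSpace ℝ E] [CompleteSpace E]
    (hf : ContinuousOn f (Ioi 0)) (hg : IntegrableOn g (Ioi 0))
    (hfg : ∀ x > 0, ∀ y ∈ Icc x (x + 1), ‖f y‖ ≤ g x) :
    Tendsto (fun β => ∫ x in Ioi 0, f (β * ⌈x / β⌉₊)) (𝓝[>] 0) (𝓝 (∫ x in Ioi 0, f x)) := by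
  have hβ : ∀ᶠ β in 𝓝[>] (0 : ℝ), β ∈ Ioc 0 1 := Ioc_mem_nhdsGT zero_lt_one
  refine tendsto_integral_filter_of_dominated_convergence g
    (.of_forall fun _ => aestronglyMeasurable_comp_mul_natCeil_div f _) ?_ hg ?_
  · filter_upwards [hβ] with β hβ
    filter_upwards [ae_restrict_mem measurableSet_Ioi] with x hx
    exact norm_comp_mul_natCeil_div_le hfg hβ hx
  · filter_upwards [ae_restrict_mem measurableSet_Ioi] with x hx
    exact ((hf.continuousAt (Ioi_mem_nhds hx)).tendsto.comp (tendsto_mul_natCeil_div hx.le))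

lemma eventually_hasSum_smul_comp_mul_succ [NormedSpace ℝ E] [CompleteSpace E]
    (hg : IntegrableOn g (Ioi 0)) (hfg : ∀ x > 0, ∀ y ∈ Icc x (x + 1), ‖f y‖ ≤ g x) :
    ∀ᶠ β in 𝓝[>] 0, HasSum (fun j : ℕ => β • f (β * (j + 1)))
      (∫ x in Ioi 0, f (β * ⌈x / β⌉₊)) := by
  filter_upwards [Ioc_mem_nhdsGT zero_lt_one] with β hβ
  exact hasSum_integral_comp_mul_natCeil_div hβ.1 (integrableOn_comp_mul_natCeil_div hg hfg hβ)

theorem tendsto_tsum_smul_comp_mul_succ [NormedSpace ℝ E] [CompleteSpace E]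
    (hf : ContinuousOn f (Ioi 0)) (hg : IntegrableOn g (Ioi 0))
    (hfg : ∀ x > 0, ∀ y ∈ Icc x (x + 1), ‖f y‖ ≤ g x) :
    Tendsto (fun β => ∑' j : ℕ, β • f (β * (j + 1))) (𝓝[>] 0) (𝓝 (∫ x in Ioi 0, f x)) :=
  (tendsto_integral_comp_mul_natCeil_div hf hg hfg).congr'
    ((eventually_hasSum_smul_comp_mul_succ hg hfg).mono fun _ h => h.tsum_eq.symm)

end RiemannSum

lemma mul_exp_half_le_exp_sub_one {y : ℝ} (hy : 0 ≤ y) : y * exp (y / 2) ≤ exp y - 1 := by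
  have hsinh : y / 2 ≤ sinh (y / 2) := self_le_sinh_iff.mpr (by linarith)
  calc y * exp (y / 2) ≤ 2 * sinh (y / 2) * exp (y / 2) := by gcongr; linarith
    _ = exp y - 1 := by
      rw [sinh_eq, exp_neg]
      field_simp
      rw [sq, ← exp_add, add_halves]

lemma rpow_div_exp_sub_one_le {t y : ℝ} (ht₁ : 1 ≤ t) (ht₂ : t ≤ 2) (hy : 0 ≤ y) :
    y ^ t / (exp y - 1) ≤ (y + 1) * exp (-(y / 2)) := by
  rcases hy.eq_or_lt with rfl | hy
  · rw [zero_rpow (by linarith), zero_div]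
    positivity
  have hpow : y ^ (t - 1) ≤ y + 1 := by
    rcases le_total y 1 with h | h
    · linarith [rpow_le_one hy.le h (by linarith : 0 ≤ t - 1)]
    · calc y ^ (t - 1) ≤ y ^ (1 : ℝ) := rpow_le_rpow_of_exponent_le h (by linarith)
        _ ≤ y + 1 := by rw [rpow_one]; linarith
  calc y ^ t / (exp y - 1) ≤ y ^ t / (y * exp (y / 2)) := by
        gcongr
        exact mul_exp_half_le_exp_sub_one hy.le
    _ = y ^ (t - 1) * exp (-(y / 2)) := by
        rw [rpow_sub_one hy.ne', exp_neg]
        field_simp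
    _ ≤ (y + 1) * exp (-(y / 2)) := by gcongr

lemma norm_rpow_div_exp_sub_one_le {t x y : ℝ} (ht₁ : 1 ≤ t) (ht₂ : t ≤ 2) (hx : 0 < x)
    (hy : y ∈ Icc x (x + 1)) : ‖y ^ t / (exp y - 1)‖ ≤ (x + 2) * exp (-(x / 2)) := by
  have hy₀ : 0 ≤ y := hx.le.trans hy.1
  rw [norm_of_nonneg (div_nonneg (rpow_nonneg hy₀ t) (sub_nonneg.2 (one_le_exp hy₀)))]
  calc y ^ t / (exp y - 1) ≤ (y + 1) * exp (-(y / 2)) := rpow_div_exp_sub_one_le ht₁ ht₂ hy₀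
    _ ≤ (x + 2) * exp (-(x / 2)) :=
      mul_le_mul (by linarith [hy.2]) (exp_le_exp.2 (by linarith [hy.1])) (exp_nonneg _)
        (by linarith)

lemma integrableOn_add_two_mul_exp_neg_half :
    IntegrableOn (fun x : ℝ => (x + 2) * exp (-(x / 2))) (Ioi 0) := by
  have hlin : IntegrableOn (fun x : ℝ => x ^ (1 : ℝ) * exp (-(1 / 2) * x ^ (1 : ℝ))) (Ioi 0) :=
    integrableOn_rpow_mul_exp_neg_mul_rpow (by norm_num) one_pos (by norm_num)
  have hconst := (exp_neg_integrableOn_Ioi 0 (by norm_num : (0 : ℝ) < 1 / 2)).const_mul 2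
  refine (hlin.add hconst).congr_fun (fun x _ => ?_) measurableSet_Ioi
  simp only [rpow_one, Pi.add_apply]
  ring_nf

lemma continuousOn_rpow_div_exp_sub_one (t : ℝ) :
    ContinuousOn (fun y : ℝ => y ^ t / (exp y - 1)) (Ioi 0) := by
  refine ((continuousOn_id.rpow_const fun y hy => Or.inl (ne_of_gt hy)).div
    (by fun_prop) fun y hy => ?_)
  exact sub_ne_zero.2 (one_lt_exp_iff.2 hy).ne'

lemma hasSum_exp_neg_succ_mul {t : ℝ} (ht : 0 < t) :
    HasSum (fun n : ℕ => exp (-(n + 1) * t)) (exp t - 1)⁻¹ := by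
  have hgeom := (hasSum_geometric_of_lt_one (exp_nonneg (-t))
    (exp_lt_one_iff.2 (neg_neg_of_pos ht))).mul_left (exp (-t))
  have hterm (n : ℕ) : exp (-t) * exp (-t) ^ n = exp (-(n + 1) * t) := by
    rw [← exp_nat_mul, ← exp_add]
    ring_nf
  have hsum : exp (-t) * (1 - exp (-t))⁻¹ = (exp t - 1)⁻¹ := by
    have : exp t - 1 ≠ 0 := sub_ne_zero.2 (one_lt_exp_iff.2 ht).ne'
    rw [exp_neg]
    field_simp
  simpa only [hterm, hsum] using hgeom

theorem Gamma_mul_riemannZeta_eq_mellin {s : ℂ} (hs : 1 < s.re) :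
    Complex.Gamma s * riemannZeta s = mellin (fun t => (((exp t - 1)⁻¹ : ℝ) : ℂ)) s := by
  have hmellin := hasSum_mellin (a := fun _ : ℕ => 1) (p := fun n => n + 1)
    (F := fun t => (((exp t - 1)⁻¹ : ℝ) : ℂ)) (s := s)
    (fun n => Or.inr n.cast_add_one_pos) (by linarith)
    (fun t ht => by
      simpa only [one_mul] using Complex.hasSum_ofReal.2 (hasSum_exp_neg_succ_mul ht))
    (((Real.summable_one_div_nat_add_rpow 1 s.re).2 hs).congr fun n => by
      rw [abs_of_pos n.cast_add_one_pos, norm_one])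
  rw [zeta_eq_tsum_one_div_nat_add_one_cpow hs, ← tsum_mul_left, ← hmellin.tsum_eq]
  congr 1
  funext n
  push_cast
  ring

theorem Gamma_mul_riemannZeta_re_eq_integral {s : ℝ} (hs : 1 < s) :
    Gamma s * (riemannZeta s).re = ∫ x in Ioi 0, x ^ (s - 1) / (exp x - 1) := by
  have hmellin : mellin (fun t => (((exp t - 1)⁻¹ : ℝ) : ℂ)) s
      = ((∫ x in Ioi 0, x ^ (s - 1) / (exp x - 1) : ℝ) : ℂ) := by
    rw [mellin, ← integral_complex_ofReal]
    refine setIntegral_congr_fun measurableSet_Ioi fun x hx => ?_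
    rw [← Complex.ofReal_one, ← Complex.ofReal_sub, ← Complex.ofReal_cpow (le_of_lt hx),
      smul_eq_mul, ← Complex.ofReal_mul, div_eq_mul_inv]
  have h := congrArg Complex.re (Gamma_mul_riemannZeta_eq_mellin (s := s) (by simpa))
  rwa [Complex.Gamma_ofReal, Complex.re_ofReal_mul, hmellin, Complex.ofReal_re] at h

lemma smul_rpow_div_exp_sub_one_mul {β m : ℝ} (hβ : 0 < β) (hm : 0 ≤ m) (t : ℝ) :
    β • ((β * m) ^ t / (exp (β * m) - 1)) = β ^ (t + 1) * (m ^ t / (exp (β * m) - 1)) := by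
  rw [smul_eq_mul, mul_rpow hβ.le hm, rpow_add_one hβ.ne']
  ring

lemma eventually_summable_rpow_div_exp_sub_one {t : ℝ} (ht₁ : 1 ≤ t) (ht₂ : t ≤ 2) :
    ∀ᶠ β in 𝓝[>] 0, Summable fun j : ℕ => ((j : ℝ) + 1) ^ t / (exp (β * (j + 1)) - 1) := by
  filter_upwards [eventually_hasSum_smul_comp_mul_succ integrableOn_add_two_mul_exp_neg_half
    fun x hx y hy => norm_rpow_div_exp_sub_one_le ht₁ ht₂ hx hy, self_mem_nhdsWithin]
    with β hsum (hβ : 0 < β)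
  simp_rw [smul_rpow_div_exp_sub_one_mul hβ (Nat.cast_add_one_pos _).le] at hsum
  exact (summable_mul_left_iff (rpow_pos_of_pos hβ _).ne').1 hsum.summable

theorem tendsto_rpow_mul_tsum_rpow_div_exp_sub_one {t : ℝ} (ht₁ : 1 ≤ t) (ht₂ : t ≤ 2) :
    Tendsto (fun β => β ^ (t + 1) * ∑' j : ℕ, ((j : ℝ) + 1) ^ t / (exp (β * (j + 1)) - 1))
      (𝓝[>] 0) (𝓝 (∫ x in Ioi 0, x ^ t / (exp x - 1))) := by
  refine (tendsto_tsum_smul_comp_mul_succ (continuousOn_rpow_div_exp_sub_one t)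
    integrableOn_add_two_mul_exp_neg_half
    fun x hx y hy => norm_rpow_div_exp_sub_one_le ht₁ ht₂ hx hy).congr' ?_
  filter_upwards [self_mem_nhdsWithin] with β (hβ : 0 < β)
  simp_rw [smul_rpow_div_exp_sub_one_mul hβ (Nat.cast_add_one_pos _).le, tsum_mul_left]

lemma mul_floor_sqrt_mem_Icc {m : ℝ} (hm : 0 ≤ m) :
    m * ⌊√m⌋₊ ∈ Icc (m ^ (3 / 2 : ℝ) - m) (m ^ (3 / 2 : ℝ)) := by
  have hpow : m ^ (3 / 2 : ℝ) = m * √m := by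
    rw [show (3 / 2 : ℝ) = 1 + 1 / 2 by norm_num, rpow_add' hm (by norm_num), rpow_one,
      sqrt_eq_rpow]
  have hle := Nat.floor_le (sqrt_nonneg m)
  have hlt := Nat.lt_floor_add_one √m
  rw [hpow]
  constructor <;> nlinarith

theorem tendsto_rpow_mul_tsum_div_exp_sub_one :
    Tendsto (fun β => β ^ (5 / 2 : ℝ) * ∑' j : ℕ, ((j : ℝ) + 1) / (exp (β * (j + 1)) - 1))
      (𝓝[>] 0) (𝓝 0) := by
  have hlim := tendsto_rpow_mul_tsum_rpow_div_exp_sub_one le_rfl one_le_two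
  norm_num at hlim
  have hsqrt : Tendsto (fun β : ℝ => β ^ (1 / 2 : ℝ)) (𝓝[>] 0) (𝓝 0) := by
    simpa using ((continuous_rpow_const (by norm_num : (0 : ℝ) ≤ 1 / 2)).tendsto 0).mono_left
      nhdsWithin_le_nhds
  refine (zero_mul (∫ x in Ioi 0, x / (exp x - 1)) ▸ hsqrt.mul hlim).congr' ?_
  filter_upwards [self_mem_nhdsWithin] with β (hβ : 0 < β)
  rw [← mul_assoc, ← rpow_two, ← rpow_add hβ]
  norm_num

lemma tsum_mul_floor_sqrt_div_exp_sub_one_mem_Icc {β : ℝ} (hβ : 0 < β)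
    (hA : Summable fun j : ℕ => ((j : ℝ) + 1) ^ (3 / 2 : ℝ) / (exp (β * (j + 1)) - 1))
    (hB : Summable fun j : ℕ => ((j : ℝ) + 1) / (exp (β * (j + 1)) - 1)) :
    ∑' j : ℕ, ((j : ℝ) + 1) * ⌊√((j : ℝ) + 1)⌋₊ / (exp (β * (j + 1)) - 1) ∈
      Icc (∑' j : ℕ, ((j : ℝ) + 1) ^ (3 / 2 : ℝ) / (exp (β * (j + 1)) - 1) -
          ∑' j : ℕ, ((j : ℝ) + 1) / (exp (β * (j + 1)) - 1))
        (∑' j : ℕ, ((j : ℝ) + 1) ^ (3 / 2 : ℝ) / (exp (β * (j + 1)) - 1)) := by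
  have hbounds (j : ℕ) := mul_floor_sqrt_mem_Icc (m := (j : ℝ) + 1) (by positivity)
  have hden (j : ℕ) : 0 < exp (β * (j + 1)) - 1 := sub_pos.2 (one_lt_exp_iff.2 (by positivity))
  have hupper (j : ℕ) : ((j : ℝ) + 1) * ⌊√((j : ℝ) + 1)⌋₊ / (exp (β * (j + 1)) - 1)
      ≤ ((j : ℝ) + 1) ^ (3 / 2 : ℝ) / (exp (β * (j + 1)) - 1) :=
    div_le_div_of_nonneg_right (hbounds j).2 (hden j).le
  have hN := hA.of_nonneg_of_le (fun j => div_nonneg (by positivity) (hden j).le) hupper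
  refine ⟨?_, hN.tsum_le_tsum hupper hA⟩
  rw [← hA.tsum_sub hB]
  refine (hA.sub hB).tsum_le_tsum (fun j => ?_) hN
  rw [← sub_div]
  exact div_le_div_of_nonneg_right (hbounds j).1 (hden j).le

theorem tendsto_rpow_mul_tsum_mul_floor_sqrt_div_exp_sub_one :
    Tendsto (fun β => β ^ (5 / 2 : ℝ) *
        ∑' j : ℕ, ((j : ℝ) + 1) * ⌊√((j : ℝ) + 1)⌋₊ / (exp (β * (j + 1)) - 1))
      (𝓝[>] 0) (𝓝 (∫ x in Ioi 0, x ^ (3 / 2 : ℝ) / (exp x - 1))) := by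
  have hlim := tendsto_rpow_mul_tsum_rpow_div_exp_sub_one (t := 3 / 2) (by norm_num) (by norm_num)
  norm_num at hlim
  refine tendsto_of_tendsto_of_tendsto_of_le_of_le'
    (by simpa using hlim.sub tendsto_rpow_mul_tsum_div_exp_sub_one) hlim ?_ ?_ <;>
  filter_upwards [self_mem_nhdsWithin,
    eventually_summable_rpow_div_exp_sub_one (t := 3 / 2) (by norm_num) (by norm_num),
    eventually_summable_rpow_div_exp_sub_one le_rfl one_le_two] with β (hβ : 0 < β) hA hB
  · simp only [rpow_one] at hB
    rw [← mul_sub]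
    exact mul_le_mul_of_nonneg_left
      (tsum_mul_floor_sqrt_div_exp_sub_one_mem_Icc hβ hA hB).1 (by positivity)
  · simp only [rpow_one] at hB
    exact mul_le_mul_of_nonneg_left
      (tsum_mul_floor_sqrt_div_exp_sub_one_mem_Icc hβ hA hB).2 (by positivity)

/-- As β → 0⁺, Σ_{j≥1} j⌊√j⌋/(e^{βj}−1) ∼ β^{-5/2} Γ(5/2) ζ(5/2), the constant
being the Bose integral ∫_0^∞ x^{3/2}/(e^x−1) dx. -/
theorem bose_energy_sum_asymptotic :
    Filter.Tendsto
      (fun β : ℝ =>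
        (∑' j : ℕ, ((j + 1 : ℕ) : ℝ) * (⌊Real.sqrt ((j + 1 : ℕ) : ℝ)⌋₊ : ℝ) /
            (Real.exp (β * ((j + 1 : ℕ) : ℝ)) - 1)) /
          (β ^ (-(5:ℝ)/2) * Real.Gamma (5/2) * (riemannZeta (5/2)).re))
      (nhdsWithin 0 (Set.Ioi 0)) (nhds 1) ∧
    Real.Gamma (5/2) * (riemannZeta (5/2)).re =
      ∫ x in Set.Ioi (0:ℝ), x ^ ((3:ℝ)/2) / (Real.exp x - 1) := by
  have hζ : riemannZeta (5 / 2) = riemannZeta ((5 / 2 : ℝ) : ℂ) := by push_cast; rfl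
  have hbose : Gamma (5 / 2) * (riemannZeta (5 / 2)).re
      = ∫ x in Ioi 0, x ^ (3 / 2 : ℝ) / (exp x - 1) := by
    rw [hζ, Gamma_mul_riemannZeta_re_eq_integral (by norm_num)]
    norm_num
  have hC : 0 < Gamma (5 / 2) * (riemannZeta (5 / 2)).re :=
    mul_pos (Gamma_pos_of_pos (by norm_num)) (hζ ▸ riemannZeta_re_pos_of_one_lt (by norm_num))
  refine ⟨?_, hbose⟩
  have hlim := tendsto_rpow_mul_tsum_mul_floor_sqrt_div_exp_sub_one.div_const
    (Gamma (5 / 2) * (riemannZeta (5 / 2)).re)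
  rw [← hbose, div_self hC.ne'] at hlim
  refine hlim.congr' ?_
  filter_upwards [self_mem_nhdsWithin] with β (hβ : 0 < β)
  rw [neg_div, rpow_neg hβ.le]
  push_cast
  set S := ∑' j : ℕ, ((j : ℝ) + 1) * ⌊√((j : ℝ) + 1)⌋₊ / (exp (β * (j + 1)) - 1)
  field_simp
end
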